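/- arXiv:1107.4906 — 3 statements merged into one kernel-verified Lean document; each statement's English description precedes it below -/
import Mathlib

section
/- Let P1, P2, P3 be three distinct points of P^1 x P^1 such that no two of them lie on a common rule (their first coordinates are pairwise distinct and their second coordinates are pairwise distinct), and let I = I({P1,P2,P3}). Then γ(I) = 2, i.e., α(I^(m))/m tends to 2 as m → ∞. -/
open MvPolynomial

noncomputable section

/-- The weights giving the bigrading on `k[x0,x1,y0,y1]` with
`deg x0 = deg x1 = (1,0)` and `deg y0 = deg y1 = (0,1)`. -/
def w4 : Fin 4 → ℕ × ℕ := ![(1,0), (1,0), (0,1), (0,1)]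

variable (k : Type*) [Field k]

/-- `p = ((a0,a1),(b0,b1))` represents a point `[a0:a1] × [b0:b1]` of `P^1 × P^1`
if neither pair of coordinates is identically zero. -/
def IsPtRep (p : (k × k) × (k × k)) : Prop := p.1 ≠ 0 ∧ p.2 ≠ 0

/-- Two (nonzero) vectors of `k²` define the same point of `P^1`. -/
def ProjEq (u v : k × k) : Prop := u.1 * v.2 = u.2 * v.1

/-- Two representatives define the same point of `P^1 × P^1`. -/
def PtEq (p q : (k × k) × (k × k)) : Prop := ProjEq k p.1 q.1 ∧ ProjEq k p.2 q.2

/-- The bihomogeneous ideal of the point `[a0:a1] × [b0:b1]`, namely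
`(a1*x0 - a0*x1, b1*y0 - b0*y1)`. -/
def pointIdeal (p : (k × k) × (k × k)) : Ideal (MvPolynomial (Fin 4) k) :=
  Ideal.span {C p.1.2 * X 0 - C p.1.1 * X 1, C p.2.2 * X 2 - C p.2.1 * X 3}

/-- The ideal `I(Z) = ∩ I(P_i)` of a finite tuple of points. -/
def idealOfPoints {s : ℕ} (Z : Fin s → (k × k) × (k × k)) :
    Ideal (MvPolynomial (Fin 4) k) :=
  ⨅ i, pointIdeal k (Z i)

/-- The `m`-th symbolic power `I(Z)^(m) = ∩ I(P_i)^m`. -/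
def symbolicPower {s : ℕ} (Z : Fin s → (k × k) × (k × k)) (m : ℕ) :
    Ideal (MvPolynomial (Fin 4) k) :=
  ⨅ i, (pointIdeal k (Z i)) ^ m

/-- The bigraded piece `J_(i,j)` of a bihomogeneous ideal, as a `k`-subspace. -/
def bipiece (J : Ideal (MvPolynomial (Fin 4) k)) (d : ℕ × ℕ) :
    Submodule k (MvPolynomial (Fin 4) k) :=
  (Submodule.restrictScalars k J) ⊓ (weightedHomogeneousSubmodule k w4 d)

/-- `α(J)`: the least total degree `t = i + j` in which `J` has a nonzero
bihomogeneous element of bidegree `(i,j)`. -/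
def alpha (J : Ideal (MvPolynomial (Fin 4) k)) : ℕ :=
  sInf {t | ∃ F ∈ J, F ≠ 0 ∧ ∃ d : ℕ × ℕ, d.1 + d.2 = t ∧ F.IsWeightedHomogeneous w4 d}

/-- The coordinates of a tuple of points of `P^1 × P^1`, as a point of affine `4s`-space. -/
def coordsOf {s : ℕ} (Z : Fin s → (k × k) × (k × k)) : Fin s × Fin 4 → k :=
  fun p => ![(Z p.1).1.1, (Z p.1).1.2, (Z p.1).2.1, (Z p.1).2.2] p.2

/-- The weights making `k[(P^1 × P^1)^s]` multigraded. -/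
def wProd (s : ℕ) : Fin s × Fin 4 → (Fin s → ℕ × ℕ) := fun p => Pi.single p.1 (w4 p.2)

/-- `GeneralPosition k s P` says that property `P` holds for `s` general points of
`P^1 × P^1`: there is a nonempty Zariski-open subset `U` of `(P^1 × P^1)^s` (the
complement of the zero locus of a multihomogeneous form `G` not vanishing identically)
such that `P` holds for every tuple of pairwise distinct points lying in `U`. -/
def GeneralPosition (s : ℕ) (P : (Fin s → (k × k) × (k × k)) → Prop) : Prop :=
  ∃ (G : MvPolynomial (Fin s × Fin 4) k) (d : Fin s → ℕ × ℕ),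
    G.IsWeightedHomogeneous (wProd s) d ∧
    (∃ Z : Fin s → (k × k) × (k × k), (∀ i, IsPtRep k (Z i)) ∧ eval (coordsOf k Z) G ≠ 0) ∧
    ∀ Z : Fin s → (k × k) × (k × k), (∀ i, IsPtRep k (Z i)) →
      (∀ i j, i ≠ j → ¬ PtEq k (Z i) (Z j)) →
      eval (coordsOf k Z) G ≠ 0 → P Z

/-- Distinct points in multiplicity 1 generic position: every subset `S` imposes
independent conditions in every bidegree, i.e.
`dim_k I(S)_(i,j) = max {0, (i+1)(j+1) - |S|}`. -/
def Mult1Generic {s : ℕ} (Z : Fin s → (k × k) × (k × k)) : Prop :=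
  (∀ i, IsPtRep k (Z i)) ∧ (∀ i j, i ≠ j → ¬ PtEq k (Z i) (Z j)) ∧
  ∀ (S : Finset (Fin s)) (i j : ℕ),
    Module.finrank k ↥(bipiece k (⨅ a ∈ S, pointIdeal k (Z a)) (i, j))
      = (i + 1) * (j + 1) - S.card

section AuxPriv

variable {k}

theorem IsWH.pow' {w : Fin 4 → ℕ × ℕ} {p : MvPolynomial (Fin 4) k} {d : ℕ × ℕ}
    (hp : p.IsWeightedHomogeneous w d) (n : ℕ) :
    (p ^ n).IsWeightedHomogeneous w (n • d) := by
  induction n with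
  | zero => simpa using isWeightedHomogeneous_one k w
  | succ n ih =>
      rw [pow_succ, succ_nsmul]
      exact ih.mul hp

theorem IsWH.aeval' {w : Fin 4 → ℕ × ℕ} {f : Fin 4 → MvPolynomial (Fin 4) k}
    (hf : ∀ i, (f i).IsWeightedHomogeneous w (w i)) {G : MvPolynomial (Fin 4) k} {d : ℕ × ℕ}
    (hG : G.IsWeightedHomogeneous w d) :
    (aeval f G).IsWeightedHomogeneous w d := by
  conv_lhs => rw [G.as_sum]
  rw [map_sum]
  apply IsWeightedHomogeneous.sum
  intro v hv
  rw [aeval_monomial]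
  have h2 : (Finsupp.prod v fun i n => f i ^ n).IsWeightedHomogeneous w
      (∑ i ∈ v.support, v i • w i) := by
    apply IsWeightedHomogeneous.prod
    intro i _
    exact IsWH.pow' (hf i) (v i)
  have h3 : (∑ i ∈ v.support, v i • w i) = d := by
    rw [← hG (mem_support_iff.mp hv)]
    rfl
  rw [h3] at h2
  have h1 := (isWeightedHomogeneous_C w ((coeff v G))).mul h2
  rw [zero_add] at h1
  exact h1

def lowIdeal (k : Type*) [Field k] (u : Fin 4 → ℕ) (m : ℕ) :
    Ideal (MvPolynomial (Fin 4) k) where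
  carrier := {h | ∀ d ∈ h.support, m ≤ Finsupp.weight u d}
  zero_mem' := by simp
  add_mem' {p q} hp hq := by
    intro d hd
    rcases Finset.mem_union.mp (Finsupp.support_add hd) with h | h
    · exact hp d h
    · exact hq d h
  smul_mem' r p hp := by
    intro d hd
    rcases Finset.mem_add.mp (support_mul r p hd) with ⟨d1, hd1, d2, hd2, rfl⟩
    calc m ≤ Finsupp.weight u d2 := hp d2 hd2
    _ ≤ Finsupp.weight u d1 + Finsupp.weight u d2 := Nat.le_add_left _ _
    _ = Finsupp.weight u (d1 + d2) := (map_add _ _ _).symm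

theorem lowIdeal_mul {u : Fin 4 → ℕ} {m n : ℕ} {p q : MvPolynomial (Fin 4) k}
    (hp : p ∈ lowIdeal k u m) (hq : q ∈ lowIdeal k u n) : p * q ∈ lowIdeal k u (m + n) := by
  intro d hd
  rcases Finset.mem_add.mp (support_mul p q hd) with ⟨d1, hd1, d2, hd2, rfl⟩
  rw [map_add]
  exact add_le_add (hp d1 hd1) (hq d2 hd2)

theorem pow_le_lowIdeal {u : Fin 4 → ℕ} {I : Ideal (MvPolynomial (Fin 4) k)}
    (hI : I ≤ lowIdeal k u 1) (m : ℕ) : I ^ m ≤ lowIdeal k u m := by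
  induction m with
  | zero => exact fun p _ d _ => Nat.zero_le _
  | succ n ih =>
      rw [pow_succ]
      exact Ideal.mul_le.mpr fun r hr s hs => lowIdeal_mul (ih hr) (hI hs)

theorem X_mem_lowIdeal {u : Fin 4 → ℕ} {i : Fin 4} (hi : u i = 1) :
    (X i : MvPolynomial (Fin 4) k) ∈ lowIdeal k u 1 := by
  intro d hd
  rw [mem_support_iff, coeff_X'] at hd
  split_ifs at hd with h
  · subst h
    simp [Finsupp.weight_apply, hi]
  · simp at hd

theorem weight_decomp (d : Fin 4 →₀ ℕ) :
    Finsupp.weight ![0,1,0,1] d + Finsupp.weight (M := ℕ) ![1,0,1,0] d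
      = (Finsupp.weight w4 d).1 + (Finsupp.weight w4 d).2 := by
  simp only [Finsupp.weight_apply, Finsupp.sum, Prod.fst_sum, Prod.snd_sum]
  rw [← Finset.sum_add_distrib, ← Finset.sum_add_distrib]
  apply Finset.sum_congr rfl
  intro i _
  fin_cases i <;> simp [w4]

theorem hCX (c : k) (l : Fin 4) : IsWeightedHomogeneous w4 (C c * X l) (w4 l) := by
  simpa using (isWeightedHomogeneous_C w4 c).mul (isWeightedHomogeneous_X k w4 l)

set_option maxHeartbeats 2000000

theorem alpha_key (a10 a11 a20 a21 a30 a31 b10 b11 b20 b21 b30 b31 : k)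
    (h12a : a10 * a21 ≠ a11 * a20) (h12b : b10 * b21 ≠ b11 * b20)
    (h13a : a10 * a31 ≠ a11 * a30) (h13b : b10 * b31 ≠ b11 * b30)
    (h23a : a20 * a31 ≠ a21 * a30) (h23b : b20 * b31 ≠ b21 * b30)
    (m : ℕ) :
    alpha k (symbolicPower k
      ![((a10,a11),(b10,b11)), ((a20,a21),(b20,b21)), ((a30,a31),(b30,b31))] m) = 2*m := by
  have hd12 : a11*a20 - a10*a21 ≠ 0 := sub_ne_zero_of_ne (Ne.symm h12a)
  have he12 : b11*b20 - b10*b21 ≠ 0 := sub_ne_zero_of_ne (Ne.symm h12b)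
  have hd1 : a11*a30 - a10*a31 ≠ 0 := sub_ne_zero_of_ne (Ne.symm h13a)
  have he1 : b11*b30 - b10*b31 ≠ 0 := sub_ne_zero_of_ne (Ne.symm h13b)
  have hd2 : a21*a30 - a20*a31 ≠ 0 := sub_ne_zero_of_ne (Ne.symm h23a)
  have he2 : b21*b30 - b20*b31 ≠ 0 := sub_ne_zero_of_ne (Ne.symm h23b)
  set F0 : MvPolynomial (Fin 4) k :=
    C ((a21*a30 - a20*a31) * (b11*b30 - b10*b31)) *
      ((C a11 * X 0 - C a10 * X 1) * (C b21 * X 2 - C b20 * X 3)) -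
    C ((a11*a30 - a10*a31) * (b21*b30 - b20*b31)) *
      ((C a21 * X 0 - C a20 * X 1) * (C b11 * X 2 - C b10 * X 3)) with hF0def
  -- F0 belongs to each point ideal
  have mem1 : F0 ∈ pointIdeal k ((a10,a11),(b10,b11)) := by
    rw [pointIdeal, Ideal.mem_span_pair]
    refine ⟨C ((a21*a30 - a20*a31) * (b11*b30 - b10*b31)) * (C b21 * X 2 - C b20 * X 3),
      -(C ((a11*a30 - a10*a31) * (b21*b30 - b20*b31)) * (C a21 * X 0 - C a20 * X 1)), ?_⟩
    rw [hF0def]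
    ring
  have mem2 : F0 ∈ pointIdeal k ((a20,a21),(b20,b21)) := by
    rw [pointIdeal, Ideal.mem_span_pair]
    refine ⟨-(C ((a11*a30 - a10*a31) * (b21*b30 - b20*b31)) * (C b11 * X 2 - C b10 * X 3)),
      C ((a21*a30 - a20*a31) * (b11*b30 - b10*b31)) * (C a11 * X 0 - C a10 * X 1), ?_⟩
    rw [hF0def]
    ring
  have mem3 : F0 ∈ pointIdeal k ((a30,a31),(b30,b31)) := by
    rw [pointIdeal, Ideal.mem_span_pair]
    refine ⟨-(C ((a11*a20 - a10*a21) * (b11*b30 - b10*b31)) * (C b21 * X 2 - C b20 * X 3)),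
      C ((a11*a30 - a10*a31) * (b11*b20 - b10*b21)) * (C a21 * X 0 - C a20 * X 1), ?_⟩
    rw [hF0def]
    simp only [map_mul, map_sub]
    ring
  -- F0 is nonzero
  have hevF : eval (![a20, a21, b10, b11] : Fin 4 → k) F0 =
      (a21*a30 - a20*a31) * (b11*b30 - b10*b31) * ((a11*a20 - a10*a21) * (b21*b10 - b20*b11)) := by
    rw [hF0def]
    simp only [map_sub, map_mul, eval_C, eval_X, Matrix.cons_val_zero, Matrix.cons_val_one,
      Matrix.head_cons, Matrix.cons_val_two, Matrix.tail_cons, Matrix.cons_val_three]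
    ring
  have hF0ne : F0 ≠ 0 := by
    intro h
    rw [h, map_zero] at hevF
    have hne : b21*b10 - b20*b11 ≠ 0 := fun hh => he12 (by linear_combination -hh)
    exact (mul_ne_zero (mul_ne_zero hd2 he1) (mul_ne_zero (fun hh => hd12 hh) hne)) hevF.symm
  -- F0 is weighted homogeneous of degree (1,1)
  have hF0h : IsWeightedHomogeneous w4 F0 ((1:ℕ),(1:ℕ)) := by
    have hA : ∀ c c' : k, IsWeightedHomogeneous w4 (C c * X 0 - C c' * X 1) ((1:ℕ),(0:ℕ)) :=
      fun c c' => (weightedHomogeneousSubmodule k w4 (1,0)).sub_mem (hCX c 0) (hCX c' 1)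
    have hB : ∀ c c' : k, IsWeightedHomogeneous w4 (C c * X 2 - C c' * X 3) ((0:ℕ),(1:ℕ)) :=
      fun c c' => (weightedHomogeneousSubmodule k w4 (0,1)).sub_mem (hCX c 2) (hCX c' 3)
    rw [hF0def]
    refine (weightedHomogeneousSubmodule k w4 (1,1)).sub_mem ?_ ?_
    · have := (isWeightedHomogeneous_C w4 ((a21*a30 - a20*a31) * (b11*b30 - b10*b31))).mul
        ((hA a11 a10).mul (hB b21 b20))
      simpa using this
    · have := (isWeightedHomogeneous_C w4 ((a11*a30 - a10*a31) * (b21*b30 - b20*b31))).mul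
        ((hA a21 a20).mul (hB b11 b10))
      simpa using this
  -- upper bound: 2m is in the set
  have hsymm : F0 ^ m ∈ symbolicPower k
      ![((a10,a11),(b10,b11)), ((a20,a21),(b20,b21)), ((a30,a31),(b30,b31))] m := by
    rw [symbolicPower, Ideal.mem_iInf]
    intro i
    fin_cases i
    · exact Ideal.pow_mem_pow mem1 m
    · exact Ideal.pow_mem_pow mem2 m
    · exact Ideal.pow_mem_pow mem3 m
  have hmem : 2*m ∈ {t | ∃ F ∈ symbolicPower k
      ![((a10,a11),(b10,b11)), ((a20,a21),(b20,b21)), ((a30,a31),(b30,b31))] m,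
      F ≠ 0 ∧ ∃ d : ℕ × ℕ, d.1 + d.2 = t ∧ F.IsWeightedHomogeneous w4 d} := by
    refine ⟨F0 ^ m, hsymm, pow_ne_zero m hF0ne, (m, m), by omega, ?_⟩
    have := IsWH.pow' hF0h m
    rwa [show m • ((1:ℕ),(1:ℕ)) = (m, m) by ext <;> simp] at this
  -- lower bound
  have hlow : ∀ t ∈ {t | ∃ F ∈ symbolicPower k
      ![((a10,a11),(b10,b11)), ((a20,a21),(b20,b21)), ((a30,a31),(b30,b31))] m,
      F ≠ 0 ∧ ∃ d : ℕ × ℕ, d.1 + d.2 = t ∧ F.IsWeightedHomogeneous w4 d}, 2*m ≤ t := by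
    rintro t ⟨F, hF, hFne, ⟨i, j⟩, hij, hwF⟩
    rw [symbolicPower, Ideal.mem_iInf] at hF
    have hF1 : F ∈ (pointIdeal k ((a10,a11),(b10,b11))) ^ m := hF 0
    have hF2 : F ∈ (pointIdeal k ((a20,a21),(b20,b21))) ^ m := hF 1
    have hΔx : a10*a21 - a11*a20 ≠ 0 := sub_ne_zero_of_ne h12a
    have hΔy : b10*b21 - b11*b20 ≠ 0 := sub_ne_zero_of_ne h12b
    set Δx := a10*a21 - a11*a20 with hΔxdef
    set Δy := b10*b21 - b11*b20 with hΔydef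
    set f : Fin 4 → MvPolynomial (Fin 4) k :=
      ![C a10 * X 0 + C a20 * X 1, C a11 * X 0 + C a21 * X 1,
        C b10 * X 2 + C b20 * X 3, C b11 * X 2 + C b21 * X 3] with hfdef
    set g : Fin 4 → MvPolynomial (Fin 4) k :=
      ![C (a21/Δx) * X 0 - C (a20/Δx) * X 1, C (a10/Δx) * X 1 - C (a11/Δx) * X 0,
        C (b21/Δy) * X 2 - C (b20/Δy) * X 3, C (b10/Δy) * X 3 - C (b11/Δy) * X 2] with hgdef
    have hcomp : ∀ p : MvPolynomial (Fin 4) k, aeval g (aeval f p) = p := by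
      have hcomp' : (aeval g).comp (aeval f) = AlgHom.id k (MvPolynomial (Fin 4) k) := by
        apply MvPolynomial.algHom_ext
        intro l
        have e1 : (C (a10 * (a21/Δx)) : MvPolynomial (Fin 4) k) - C (a20 * (a11/Δx)) = 1 := by
          rw [← map_sub, show a10 * (a21/Δx) - a20 * (a11/Δx) = 1 by field_simp; ring, map_one]
        have e2 : (C (a10 * (a20/Δx)) : MvPolynomial (Fin 4) k) - C (a20 * (a10/Δx)) = 0 := by
          rw [← map_sub, show a10 * (a20/Δx) - a20 * (a10/Δx) = 0 by ring, map_zero]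
        have e3 : (C (a21 * (a10/Δx)) : MvPolynomial (Fin 4) k) - C (a11 * (a20/Δx)) = 1 := by
          rw [← map_sub, show a21 * (a10/Δx) - a11 * (a20/Δx) = 1 by field_simp; ring, map_one]
        have e4 : (C (a11 * (a21/Δx)) : MvPolynomial (Fin 4) k) - C (a21 * (a11/Δx)) = 0 := by
          rw [← map_sub, show a11 * (a21/Δx) - a21 * (a11/Δx) = 0 by ring, map_zero]
        have f1 : (C (b10 * (b21/Δy)) : MvPolynomial (Fin 4) k) - C (b20 * (b11/Δy)) = 1 := by
          rw [← map_sub, show b10 * (b21/Δy) - b20 * (b11/Δy) = 1 by field_simp; ring, map_one]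
        have f2 : (C (b10 * (b20/Δy)) : MvPolynomial (Fin 4) k) - C (b20 * (b10/Δy)) = 0 := by
          rw [← map_sub, show b10 * (b20/Δy) - b20 * (b10/Δy) = 0 by ring, map_zero]
        have f3 : (C (b21 * (b10/Δy)) : MvPolynomial (Fin 4) k) - C (b11 * (b20/Δy)) = 1 := by
          rw [← map_sub, show b21 * (b10/Δy) - b11 * (b20/Δy) = 1 by field_simp; ring, map_one]
        have f4 : (C (b11 * (b21/Δy)) : MvPolynomial (Fin 4) k) - C (b21 * (b11/Δy)) = 0 := by
          rw [← map_sub, show b11 * (b21/Δy) - b21 * (b11/Δy) = 0 by ring, map_zero]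
        simp only [map_mul] at e1 e2 e3 e4 f1 f2 f3 f4
        fin_cases l <;>
          simp [hfdef, hgdef, aeval_X, map_add, map_sub, map_mul, aeval_C, algebraMap_eq,
            Matrix.cons_val_zero, Matrix.cons_val_one, Matrix.head_cons]
        · linear_combination (X 0 : MvPolynomial (Fin 4) k) * e1 -
            (X 1 : MvPolynomial (Fin 4) k) * e2
        · linear_combination (X 1 : MvPolynomial (Fin 4) k) * e3 +
            (X 0 : MvPolynomial (Fin 4) k) * e4
        · linear_combination (X 2 : MvPolynomial (Fin 4) k) * f1 -
            (X 3 : MvPolynomial (Fin 4) k) * f2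
        · linear_combination (X 3 : MvPolynomial (Fin 4) k) * f3 +
            (X 2 : MvPolynomial (Fin 4) k) * f4
      intro p
      calc aeval g (aeval f p) = ((aeval g).comp (aeval f)) p := rfl
      _ = p := by rw [hcomp']; rfl
    have hτne : aeval f F ≠ 0 := fun h => hFne (by rw [← hcomp F, h, map_zero])
    -- the images of the two point ideals
    have hmap1 : Ideal.map (aeval f) (pointIdeal k ((a10,a11),(b10,b11))) ≤
        Ideal.span {(X 1 : MvPolynomial (Fin 4) k), X 3} := by
      rw [pointIdeal, Ideal.map_span, Set.image_insert_eq, Set.image_singleton]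
      refine Ideal.span_le.mpr ?_
      intro q hq
      rcases Set.mem_insert_iff.mp hq with rfl | hq'
      · have : (aeval f) (C a11 * X 0 - C a10 * X 1) = C (a11*a20 - a10*a21) * X 1 := by
          simp only [map_sub, map_mul, aeval_C, aeval_X, algebraMap_eq, hfdef,
            Matrix.cons_val_zero, Matrix.cons_val_one, Matrix.head_cons,
            Matrix.cons_val_two, Matrix.tail_cons, Matrix.cons_val_three]
          ring
        rw [this]
        exact Ideal.mul_mem_left _ _ (Ideal.subset_span (by simp))
      · rw [Set.mem_singleton_iff] at hq'
        subst hq'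
        have : (aeval f) (C b11 * X 2 - C b10 * X 3) = C (b11*b20 - b10*b21) * X 3 := by
          simp only [map_sub, map_mul, aeval_C, aeval_X, algebraMap_eq, hfdef,
            Matrix.cons_val_zero, Matrix.cons_val_one, Matrix.head_cons,
            Matrix.cons_val_two, Matrix.tail_cons, Matrix.cons_val_three]
          ring
        rw [this]
        exact Ideal.mul_mem_left _ _ (Ideal.subset_span (by simp))
    have hmap2 : Ideal.map (aeval f) (pointIdeal k ((a20,a21),(b20,b21))) ≤
        Ideal.span {(X 0 : MvPolynomial (Fin 4) k), X 2} := by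
      rw [pointIdeal, Ideal.map_span, Set.image_insert_eq, Set.image_singleton]
      refine Ideal.span_le.mpr ?_
      intro q hq
      rcases Set.mem_insert_iff.mp hq with rfl | hq'
      · have : (aeval f) (C a21 * X 0 - C a20 * X 1) = C (a21*a10 - a20*a11) * X 0 := by
          simp only [map_sub, map_mul, aeval_C, aeval_X, algebraMap_eq, hfdef,
            Matrix.cons_val_zero, Matrix.cons_val_one, Matrix.head_cons,
            Matrix.cons_val_two, Matrix.tail_cons, Matrix.cons_val_three]
          ring
        rw [this]
        exact Ideal.mul_mem_left _ _ (Ideal.subset_span (by simp))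
      · rw [Set.mem_singleton_iff] at hq'
        subst hq'
        have : (aeval f) (C b21 * X 2 - C b20 * X 3) = C (b21*b10 - b20*b11) * X 2 := by
          simp only [map_sub, map_mul, aeval_C, aeval_X, algebraMap_eq, hfdef,
            Matrix.cons_val_zero, Matrix.cons_val_one, Matrix.head_cons,
            Matrix.cons_val_two, Matrix.tail_cons, Matrix.cons_val_three]
          ring
        rw [this]
        exact Ideal.mul_mem_left _ _ (Ideal.subset_span (by simp))
    have hpow1 : aeval f F ∈ (Ideal.span {(X 1 : MvPolynomial (Fin 4) k), X 3}) ^ m := by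
      have h1 : aeval f F ∈ Ideal.map (aeval f)
          ((pointIdeal k ((a10,a11),(b10,b11))) ^ m) := Ideal.mem_map_of_mem _ hF1
      rw [Ideal.map_pow] at h1
      exact Ideal.pow_right_mono hmap1 m h1
    have hpow2 : aeval f F ∈ (Ideal.span {(X 0 : MvPolynomial (Fin 4) k), X 2}) ^ m := by
      have h1 : aeval f F ∈ Ideal.map (aeval f)
          ((pointIdeal k ((a20,a21),(b20,b21))) ^ m) := Ideal.mem_map_of_mem _ hF2
      rw [Ideal.map_pow] at h1
      exact Ideal.pow_right_mono hmap2 m h1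
    have hlow1 : aeval f F ∈ lowIdeal k ![0,1,0,1] m := by
      refine pow_le_lowIdeal ?_ m hpow1
      refine Ideal.span_le.mpr ?_
      intro q hq
      rcases Set.mem_insert_iff.mp hq with rfl | hq'
      · exact X_mem_lowIdeal rfl
      · rw [Set.mem_singleton_iff] at hq'
        subst hq'
        exact X_mem_lowIdeal rfl
    have hlow2 : aeval f F ∈ lowIdeal k ![1,0,1,0] m := by
      refine pow_le_lowIdeal ?_ m hpow2
      refine Ideal.span_le.mpr ?_
      intro q hq
      rcases Set.mem_insert_iff.mp hq with rfl | hq'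
      · exact X_mem_lowIdeal rfl
      · rw [Set.mem_singleton_iff] at hq'
        subst hq'
        exact X_mem_lowIdeal rfl
    -- homogeneity of the image
    have hfw : ∀ l : Fin 4, (f l).IsWeightedHomogeneous w4 (w4 l) := by
      intro l
      fin_cases l
      · exact (weightedHomogeneousSubmodule k w4 (1,0)).add_mem (hCX a10 0) (hCX a20 1)
      · exact (weightedHomogeneousSubmodule k w4 (1,0)).add_mem (hCX a11 0) (hCX a21 1)
      · exact (weightedHomogeneousSubmodule k w4 (0,1)).add_mem (hCX b10 2) (hCX b20 3)
      · exact (weightedHomogeneousSubmodule k w4 (0,1)).add_mem (hCX b11 2) (hCX b21 3)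
    have hτh : (aeval f F).IsWeightedHomogeneous w4 (i, j) := IsWH.aeval' hfw hwF
    obtain ⟨dd, hdd⟩ := exists_coeff_ne_zero hτne
    have h13' : m ≤ Finsupp.weight ![0,1,0,1] dd := hlow1 dd (mem_support_iff.mpr hdd)
    have h02' : m ≤ Finsupp.weight (M := ℕ) ![1,0,1,0] dd := hlow2 dd (mem_support_iff.mpr hdd)
    have hw4' : Finsupp.weight w4 dd = (i, j) := hτh hdd
    have hdec := weight_decomp dd
    rw [hw4'] at hdec
    simp only at hdec hij
    omega
  exact le_antisymm (Nat.sInf_le hmem) (hlow _ (Nat.sInf_mem ⟨2*m, hmem⟩))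

end AuxPriv

/-- For three distinct points of `P^1 × P^1`, no two on a common rule,
`γ(I) = 2`, i.e. `α(I^(m))/m → 2`. -/
theorem gamma_three_points {k : Type*} [Field k] [IsAlgClosed k]
    (P1 P2 P3 : (k × k) × (k × k))
    (h1 : IsPtRep k P1) (h2 : IsPtRep k P2) (h3 : IsPtRep k P3)
    (h12a : ¬ ProjEq k P1.1 P2.1) (h12b : ¬ ProjEq k P1.2 P2.2)
    (h13a : ¬ ProjEq k P1.1 P3.1) (h13b : ¬ ProjEq k P1.2 P3.2)
    (h23a : ¬ ProjEq k P2.1 P3.1) (h23b : ¬ ProjEq k P2.2 P3.2) :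
    Filter.Tendsto
      (fun m : ℕ => (alpha k (symbolicPower k ![P1, P2, P3] m) : ℝ) / m)
      Filter.atTop (nhds 2) := by
  obtain ⟨⟨a10, a11⟩, b10, b11⟩ := P1
  obtain ⟨⟨a20, a21⟩, b20, b21⟩ := P2
  obtain ⟨⟨a30, a31⟩, b30, b31⟩ := P3
  have key : ∀ m : ℕ, alpha k (symbolicPower k
      ![((a10,a11),(b10,b11)), ((a20,a21),(b20,b21)), ((a30,a31),(b30,b31))] m) = 2*m :=
    fun m => alpha_key a10 a11 a20 a21 a30 a31 b10 b11 b20 b21 b30 b31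
      h12a h12b h13a h13b h23a h23b m
  refine Filter.Tendsto.congr' ?_ tendsto_const_nhds
  filter_upwards [Filter.eventually_gt_atTop 0] with m hm
  have hm' : (m : ℝ) ≠ 0 := Nat.cast_ne_zero.mpr hm.ne'
  rw [key m]
  push_cast
  field_simp
end
end

section
/- Let P1 and P2 be two distinct points of P^1 x P^1 that do not lie on a common rule (their first coordinates differ and their second coordinates differ), and let I = I({P1,P2}) = I(P1) ∩ I(P2). Then I^(m) = I^m for all m ≥ 1, where I^(m) = I(P1)^m ∩ I(P2)^m. In particular, for I = (x0,y0) ∩ (x1,y1) in k[x0,x1,y0,y1], one has (x0,y0)^m ∩ (x1,y1)^m = I^m for all m ≥ 1. -/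
/-!
If the two points are not on a common rule, the four linear forms `a1 x0 - a0 x1`,
`c1 x0 - c0 x1`, `b1 y0 - b0 y1`, `d1 y0 - d0 y1` cutting out `P1 = [a0:a1] × [b0:b1]` and
`P2 = [c0:c1] × [d0:d1]` are linearly independent, so a linear change of coordinates carries
`I(P1)` and `I(P2)` to `(x0, y0)` and `(x1, y1)`. For ideals `I`, `J` generated by disjoint sets
of variables, `I^a ∩ J^b = I^a J^b`: all three are monomial ideals, and a monomial lies in
`I^a` exactly when, counted with multiplicity, at least `a` of its variables are generators
of `I`.
Taking `a = b = 1` gives `I ∩ J = I J`, hence `(I ∩ J)^m = I^m J^m = I^m ∩ J^m`.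
-/

open MvPolynomial

noncomputable section

variable (k : Type*) [Field k]

namespace MvPolynomial

variable {σ R : Type*}

section WeightedSupport

variable [CommSemiring R]

variable (R) in
def weightAtLeastIdeal (w : σ → ℕ) (n : ℕ) : Ideal (MvPolynomial σ R) :=
  restrictSupportIdeal R {d | n ≤ Finsupp.weight w d} fun d e hde (hd : n ≤ _) => by
    obtain ⟨c, rfl⟩ := exists_add_of_le hde
    exact hd.trans (by simp only [map_add, le_add_iff_nonneg_right, zero_le])

theorem mem_weightAtLeastIdeal_iff {w : σ → ℕ} {n : ℕ} {p : MvPolynomial σ R} :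
    p ∈ weightAtLeastIdeal R w n ↔ ∀ d ∈ p.support, n ≤ Finsupp.weight w d :=
  Iff.rfl

theorem weightAtLeastIdeal_mul_le (w : σ → ℕ) (a b : ℕ) :
    weightAtLeastIdeal R w a * weightAtLeastIdeal R w b ≤ weightAtLeastIdeal R w (a + b) := by
  classical
  refine Ideal.mul_le.2 fun p hp q hq => mem_weightAtLeastIdeal_iff.2 fun d hd => ?_
  obtain ⟨d₁, hd₁, d₂, hd₂, rfl⟩ := Finset.mem_add.1 (support_mul p q hd)
  rw [map_add]
  exact add_le_add (mem_weightAtLeastIdeal_iff.1 hp d₁ hd₁)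
    (mem_weightAtLeastIdeal_iff.1 hq d₂ hd₂)

/-- The weight `s.indicator 1` counts, with multiplicity, the variables of a monomial that lie
in `s`. -/
theorem span_X_image_pow_le (s : Set σ) (n : ℕ) :
    Ideal.span (X '' s) ^ n ≤ weightAtLeastIdeal R (s.indicator 1) n := by
  induction n with
  | zero => simp [Ideal.one_eq_top, SetLike.le_def, mem_weightAtLeastIdeal_iff]
  | succ n ih =>
    refine (pow_succ _ n).trans_le
      ((Ideal.mul_mono ih ?_).trans (weightAtLeastIdeal_mul_le _ n 1))
    rw [Ideal.span_le]
    rintro _ ⟨i, hi, rfl⟩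
    classical
    refine mem_weightAtLeastIdeal_iff.2 fun d hd => ?_
    rw [Finset.mem_singleton.1 (support_monomial_subset hd)]
    simp [Finsupp.weight_single, hi]

theorem exists_mem_ne_zero_of_weight_indicator_pos {s : Set σ} {d : σ →₀ ℕ}
    (h : 0 < Finsupp.weight (s.indicator 1) d) : ∃ i ∈ s, d i ≠ 0 := by
  rw [Finsupp.weight_apply, Finsupp.sum] at h
  obtain ⟨i, -, hi⟩ := Finset.exists_ne_zero_of_sum_ne_zero h.ne'
  by_cases his : i ∈ s
  · exact ⟨i, his, by simp_all⟩
  · simp [his] at hi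

theorem monomial_mem_span_X_image_pow {s : Set σ} {n : ℕ} {d : σ →₀ ℕ}
    (h : n ≤ Finsupp.weight (s.indicator 1) d) (r : R) :
    monomial d r ∈ Ideal.span (X '' s) ^ n := by
  induction n generalizing d with
  | zero => simp
  | succ n ih =>
    obtain ⟨i, his, hi⟩ :=
      exists_mem_ne_zero_of_weight_indicator_pos ((Nat.succ_pos n).trans_le h)
    have hw := Finsupp.weight_sub_single_add (w := (s.indicator 1 : σ → ℕ)) hi
    rw [Set.indicator_of_mem his, Pi.one_apply] at hw
    rw [← Finsupp.sub_add_single_one_cancel hi, monomial_add_single, pow_one, pow_succ]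
    exact Ideal.mul_mem_mul (ih (by omega)) (Ideal.subset_span ⟨i, his, rfl⟩)

theorem monomial_mem_span_X_image_pow_mul_pow {s t : Set σ} (hst : Disjoint s t) {a b : ℕ}
    {d : σ →₀ ℕ} (ha : a ≤ Finsupp.weight (s.indicator 1) d)
    (hb : b ≤ Finsupp.weight (t.indicator 1) d) (r : R) :
    monomial d r ∈ Ideal.span (X '' s) ^ a * Ideal.span (X '' t) ^ b := by
  induction a generalizing d with
  | zero => simpa using monomial_mem_span_X_image_pow hb r
  | succ a ih =>
    obtain ⟨i, his, hi⟩ :=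
      exists_mem_ne_zero_of_weight_indicator_pos ((Nat.succ_pos a).trans_le ha)
    have hws := Finsupp.weight_sub_single_add (w := (s.indicator 1 : σ → ℕ)) hi
    have hwt := Finsupp.weight_sub_single_add (w := (t.indicator 1 : σ → ℕ)) hi
    rw [Set.indicator_of_mem his, Pi.one_apply] at hws
    rw [Set.indicator_of_notMem (hst.notMem_of_mem_left his), add_zero] at hwt
    rw [← Finsupp.sub_add_single_one_cancel hi, monomial_add_single, pow_one, pow_succ,
      mul_right_comm]
    exact Ideal.mul_mem_mul (ih (by omega) (by omega)) (Ideal.subset_span ⟨i, his, rfl⟩)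

theorem span_X_image_pow_inf_pow {s t : Set σ} (hst : Disjoint s t) (a b : ℕ) :
    Ideal.span (X '' s) ^ a ⊓ Ideal.span (X '' t) ^ b
      = (Ideal.span (X '' s) ^ a * Ideal.span (X '' t) ^ b : Ideal (MvPolynomial σ R)) := by
  refine le_antisymm (fun p ⟨hps, hpt⟩ => ?_) (le_inf Ideal.mul_le_left Ideal.mul_le_right)
  rw [p.as_sum]
  exact Ideal.sum_mem _ fun d hd => monomial_mem_span_X_image_pow_mul_pow hst
    (mem_weightAtLeastIdeal_iff.1 (span_X_image_pow_le s a hps) d hd)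
    (mem_weightAtLeastIdeal_iff.1 (span_X_image_pow_le t b hpt) d hd) _

theorem span_X_image_inf_pow {s t : Set σ} (hst : Disjoint s t) (m : ℕ) :
    (Ideal.span (X '' s) ⊓ Ideal.span (X '' t) : Ideal (MvPolynomial σ R)) ^ m
      = Ideal.span (X '' s) ^ m ⊓ Ideal.span (X '' t) ^ m := by
  have h := span_X_image_pow_inf_pow (R := R) hst 1 1
  rw [pow_one, pow_one] at h
  rw [h, mul_pow, span_X_image_pow_inf_pow hst]

end WeightedSupport

section LinearSubst

variable [CommRing R] [Fintype σ]

def linearSubst (M : Matrix σ σ R) : MvPolynomial σ R →ₐ[R] MvPolynomial σ R :=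
  aeval fun i => ∑ j, C (M i j) * X j

theorem linearSubst_X (M : Matrix σ σ R) (i : σ) :
    linearSubst M (X i) = ∑ j, C (M i j) * X j :=
  aeval_X _ _

theorem linearSubst_comp (M N : Matrix σ σ R) :
    (linearSubst N).comp (linearSubst M) = linearSubst (M * N) := by
  refine algHom_ext fun i => ?_
  simp only [AlgHom.comp_apply, linearSubst_X, map_sum, map_mul, algHom_C, Matrix.mul_apply,
    Finset.sum_mul, Finset.mul_sum, mul_assoc]
  exact Finset.sum_comm

theorem linearSubst_one [DecidableEq σ] : linearSubst (1 : Matrix σ σ R) = AlgHom.id R _ := by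
  refine algHom_ext fun i => ?_
  simp [linearSubst_X, Matrix.one_apply]

def linearSubstEquiv [DecidableEq σ] (M : Matrix σ σ R) (hM : IsUnit M.det) :
    MvPolynomial σ R ≃ₐ[R] MvPolynomial σ R :=
  AlgEquiv.ofAlgHom (linearSubst M) (linearSubst M⁻¹)
    (by rw [linearSubst_comp, Matrix.nonsing_inv_mul _ hM, linearSubst_one])
    (by rw [linearSubst_comp, Matrix.mul_nonsing_inv _ hM, linearSubst_one])

end LinearSubst

end MvPolynomial

theorem Ideal.map_inf_of_equiv {R S : Type*} [CommRing R] [CommRing S] (e : R ≃+* S)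
    (I J : Ideal R) : (I ⊓ J).map e = I.map e ⊓ J.map e := by
  simp only [← Ideal.comap_symm, Ideal.comap_inf]

/-- The rows are the coefficients of the linear forms defining `P = [a0:a1] × [b0:b1]` and
`Q = [c0:c1] × [d0:d1]`: `a1 x0 - a0 x1`, `c1 x0 - c0 x1`, `b1 y0 - b0 y1`, `d1 y0 - d0 y1`. -/
def pointPairMatrix (P Q : (k × k) × (k × k)) : Matrix (Fin 4) (Fin 4) k :=
  !![P.1.2, -P.1.1, 0, 0; Q.1.2, -Q.1.1, 0, 0; 0, 0, P.2.2, -P.2.1; 0, 0, Q.2.2, -Q.2.1]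

theorem det_pointPairMatrix (P Q : (k × k) × (k × k)) :
    (pointPairMatrix k P Q).det
      = (P.1.1 * Q.1.2 - P.1.2 * Q.1.1) * (P.2.1 * Q.2.2 - P.2.2 * Q.2.1) := by
  simp [pointPairMatrix, Matrix.det_succ_row_zero, Fin.sum_univ_succ, Fin.succAbove]
  ring

variable {k} in
theorem isUnit_det_pointPairMatrix {P Q : (k × k) × (k × k)} (h₁ : ¬ ProjEq k P.1 Q.1)
    (h₂ : ¬ ProjEq k P.2 Q.2) : IsUnit (pointPairMatrix k P Q).det := by
  rw [det_pointPairMatrix, isUnit_iff_ne_zero]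
  exact mul_ne_zero (sub_ne_zero.2 h₁) (sub_ne_zero.2 h₂)

theorem map_linearSubst_pointPairMatrix_span_X_zero_two (P Q : (k × k) × (k × k)) :
    (Ideal.span {X 0, X 2}).map (linearSubst (pointPairMatrix k P Q)) = pointIdeal k P := by
  simp [pointIdeal, Ideal.map_span, Set.image_pair, linearSubst_X, Fin.sum_univ_four,
    pointPairMatrix, sub_eq_add_neg]

theorem map_linearSubst_pointPairMatrix_span_X_one_three (P Q : (k × k) × (k × k)) :
    (Ideal.span {X 1, X 3}).map (linearSubst (pointPairMatrix k P Q)) = pointIdeal k Q := by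
  simp [pointIdeal, Ideal.map_span, Set.image_pair, linearSubst_X, Fin.sum_univ_four,
    pointPairMatrix, sub_eq_add_neg]

theorem symbolic_eq_ordinary_two_points_general {k : Type*} [Field k]
    (P1 P2 : (k × k) × (k × k))
    (hrule1 : ¬ ProjEq k P1.1 P2.1) (hrule2 : ¬ ProjEq k P1.2 P2.2) :
    (∀ m : ℕ, 1 ≤ m →
      pointIdeal k P1 ^ m ⊓ pointIdeal k P2 ^ m
        = (pointIdeal k P1 ⊓ pointIdeal k P2) ^ m) ∧
    (∀ m : ℕ, 1 ≤ m →
      (Ideal.span {X 0, X 2} : Ideal (MvPolynomial (Fin 4) k)) ^ m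
          ⊓ (Ideal.span {X 1, X 3}) ^ m
        = ((Ideal.span {X 0, X 2} : Ideal (MvPolynomial (Fin 4) k))
            ⊓ Ideal.span {X 1, X 3}) ^ m) := by
  have hmonomial (m : ℕ) :
      (Ideal.span {X 0, X 2} : Ideal (MvPolynomial (Fin 4) k)) ^ m ⊓ Ideal.span {X 1, X 3} ^ m
        = (Ideal.span {X 0, X 2} ⊓ Ideal.span {X 1, X 3}) ^ m := by
    simpa only [Set.image_pair] using
      (span_X_image_inf_pow (R := k) (s := {0, 2}) (t := {1, 3}) (by simp) m).symm
  refine ⟨fun m _ => ?_, fun m _ => hmonomial m⟩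
  let e := (linearSubstEquiv _ (isUnit_det_pointPairMatrix hrule1 hrule2)).toRingEquiv
  have hP1 : (Ideal.span {X 0, X 2}).map e = pointIdeal k P1 :=
    map_linearSubst_pointPairMatrix_span_X_zero_two k P1 P2
  have hP2 : (Ideal.span {X 1, X 3}).map e = pointIdeal k P2 :=
    map_linearSubst_pointPairMatrix_span_X_one_three k P1 P2
  rw [← hP1, ← hP2, ← Ideal.map_pow, ← Ideal.map_pow, ← Ideal.map_inf_of_equiv,
    ← Ideal.map_inf_of_equiv, hmonomial, Ideal.map_pow]

/-- For two distinct points of `P^1 × P^1` not on a common rule,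
`I^(m) = I^m` for all `m ≥ 1`; in particular
`(x0,y0)^m ∩ (x1,y1)^m = ((x0,y0) ∩ (x1,y1))^m` for all `m ≥ 1`. -/
theorem symbolic_eq_ordinary_two_points {k : Type*} [Field k] [IsAlgClosed k]
    (P1 P2 : (k × k) × (k × k)) (h1 : IsPtRep k P1) (h2 : IsPtRep k P2)
    (hdist : ¬ PtEq k P1 P2)
    (hrule1 : ¬ ProjEq k P1.1 P2.1) (hrule2 : ¬ ProjEq k P1.2 P2.2) :
    (∀ m : ℕ, 1 ≤ m →
      pointIdeal k P1 ^ m ⊓ pointIdeal k P2 ^ m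
        = (pointIdeal k P1 ⊓ pointIdeal k P2) ^ m) ∧
    (∀ m : ℕ, 1 ≤ m →
      (Ideal.span {X 0, X 2} : Ideal (MvPolynomial (Fin 4) k)) ^ m
          ⊓ (Ideal.span {X 1, X 3}) ^ m
        = ((Ideal.span {X 0, X 2} : Ideal (MvPolynomial (Fin 4) k))
            ⊓ Ideal.span {X 1, X 3}) ^ m) :=
  symbolic_eq_ordinary_two_points_general P1 P2 hrule1 hrule2
end
end

section
/- Let Z be a set of four points of P^1 x P^1 in multiplicity 1 generic position and let I = I(Z). Then α(I^(3)) ≤ 8 while α(I^3) = 9; in particular I^(3) is not contained in I^3, so I^(3) ≠ I^3. -/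
open MvPolynomial

noncomputable section

variable (k : Type*) [Field k]

/-! Each three of the four points lie on a nonzero `(1,1)`-form `Cᵢ` (a `(1,1)`-form has four
coefficients), so `C₀C₁C₂C₃`, of bidegree `(4,4)`, vanishes to order `3` at every point and
`α(I^(3)) ≤ 8`. On the other hand `(i+1)(j+1) ≤ 4` whenever `i + j ≤ 2`, so no nonzero form of
total degree `≤ 2` passes through the four points: `I` lies in the cube of the ideal of the
variables, hence `I^3` in its ninth power, and `α(I^3) ≥ 9`, with equality attained by the cube
of a `(2,1)`-form through the points. -/

attribute [local instance] MvPolynomial.weightedGradedAlgebra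

variable {k}

lemma weight_w4 (m : Fin 4 →₀ ℕ) : Finsupp.weight w4 m = (m 0 + m 1, m 2 + m 3) := by
  simp [Finsupp.weight_apply, Finsupp.sum_fintype, Fin.sum_univ_four, w4, Prod.ext_iff]

lemma degree_eq_weight_w4 (m : Fin 4 →₀ ℕ) :
    m.degree = (Finsupp.weight w4 m).1 + (Finsupp.weight w4 m).2 := by
  rw [weight_w4, Finsupp.degree_eq_sum, Fin.sum_univ_four]
  ring

lemma MvPolynomial.IsWeightedHomogeneous.eq_zero_of_mem_pow_idealOfVars
    {F : MvPolynomial (Fin 4) k} {d : ℕ × ℕ} {n : ℕ} (hF : F.IsWeightedHomogeneous w4 d)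
    (hFn : F ∈ idealOfVars (Fin 4) k ^ n) (hd : d.1 + d.2 < n) : F = 0 := by
  by_contra hF0
  obtain ⟨m, hm⟩ := exists_coeff_ne_zero hF0
  have hdeg := (mem_pow_idealOfVars_iff n F).1 hFn m (mem_support_iff.2 hm)
  rw [degree_eq_weight_w4, hF hm] at hdeg
  omega

instance finiteDimensional_weightedHomogeneousSubmodule_w4 (d : ℕ × ℕ) :
    FiniteDimensional k (weightedHomogeneousSubmodule k w4 d) := by
  refine Submodule.finiteDimensional_of_le (S₂ := restrictTotalDegree (Fin 4) k (d.1 + d.2)) ?_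
  intro F hF
  rw [mem_restrictTotalDegree, totalDegree]
  refine Finset.sup_le fun m hm => ?_
  change m.degree ≤ _
  rw [degree_eq_weight_w4, hF (mem_support_iff.1 hm)]

instance finiteDimensional_bipiece (J : Ideal (MvPolynomial (Fin 4) k)) (d : ℕ × ℕ) :
    FiniteDimensional k (bipiece k J d) :=
  Submodule.finiteDimensional_of_le inf_le_right

lemma exists_mem_ne_zero_of_finrank_bipiece_pos {J : Ideal (MvPolynomial (Fin 4) k)}
    {d : ℕ × ℕ} (h : 0 < Module.finrank k (bipiece k J d)) :
    ∃ F ∈ J, F ≠ 0 ∧ F.IsWeightedHomogeneous w4 d := by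
  obtain ⟨F, ⟨hFJ, hFd⟩, hF0⟩ := Submodule.exists_mem_ne_zero_of_ne_bot
    (Submodule.one_le_finrank_iff.1 h)
  exact ⟨F, hFJ, hF0, hFd⟩

lemma le_pow_idealOfVars_of_bipiece_eq_bot {J : Ideal (MvPolynomial (Fin 4) k)}
    (hJ : J.IsHomogeneous (weightedHomogeneousSubmodule k w4)) {n : ℕ}
    (h : ∀ d : ℕ × ℕ, d.1 + d.2 < n → bipiece k J d = ⊥) : J ≤ idealOfVars (Fin 4) k ^ n := by
  intro F hF
  rw [mem_pow_idealOfVars_iff']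
  intro m hm
  rw [degree_eq_weight_w4] at hm
  have hcomp : weightedHomogeneousComponent w4 (Finsupp.weight w4 m) F
      ∈ bipiece k J (Finsupp.weight w4 m) :=
    ⟨weightedHomogeneousComponent_mem_of_mem k w4 hJ hF _, weightedHomogeneousComponent_mem w4 F _⟩
  rw [h _ hm, Submodule.mem_bot] at hcomp
  simpa [coeff_weightedHomogeneousComponent] using congrArg (coeff m) hcomp

lemma isHomogeneous_pointIdeal (p : (k × k) × (k × k)) :
    (pointIdeal k p).IsHomogeneous (weightedHomogeneousSubmodule k w4) := by
  have hCX (a : k) (i : Fin 4) : (C a * X i).IsWeightedHomogeneous w4 (w4 i) :=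
    (isWeightedHomogeneous_X k w4 i).C_mul a
  refine Ideal.homogeneous_span _ _ ?_
  rintro F (rfl | rfl)
  · exact ⟨(1, 0), (hCX _ 0).sub (hCX _ 1)⟩
  · exact ⟨(0, 1), (hCX _ 2).sub (hCX _ 3)⟩

lemma alpha_le_of_mem {J : Ideal (MvPolynomial (Fin 4) k)} {F : MvPolynomial (Fin 4) k}
    {d : ℕ × ℕ} (hFJ : F ∈ J) (hF0 : F ≠ 0) (hF : F.IsWeightedHomogeneous w4 d) :
    alpha k J ≤ d.1 + d.2 :=
  Nat.sInf_le ⟨F, hFJ, hF0, d, rfl, hF⟩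

lemma alpha_eq_of_le_pow_idealOfVars {J : Ideal (MvPolynomial (Fin 4) k)} {n : ℕ}
    (hJ : J ≤ idealOfVars (Fin 4) k ^ n) {F : MvPolynomial (Fin 4) k} {d : ℕ × ℕ}
    (hFJ : F ∈ J) (hF0 : F ≠ 0) (hF : F.IsWeightedHomogeneous w4 d) (hd : d.1 + d.2 = n) :
    alpha k J = n := by
  refine le_antisymm (hd ▸ alpha_le_of_mem hFJ hF0 hF) (le_csInf ⟨_, F, hFJ, hF0, d, hd, hF⟩ ?_)
  rintro _ ⟨G, hGJ, hG0, e, rfl, hG⟩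
  exact not_lt.1 fun he => hG0 (hG.eq_zero_of_mem_pow_idealOfVars (hJ hGJ) he)

lemma prod_mem_symbolicPower {s : ℕ} (Z : Fin s → (k × k) × (k × k))
    (f : Fin s → MvPolynomial (Fin 4) k) (hf : ∀ i j, j ≠ i → f i ∈ pointIdeal k (Z j)) :
    ∏ i, f i ∈ symbolicPower k Z (s - 1) := by
  rw [symbolicPower, Ideal.mem_iInf]
  intro j
  rw [← Finset.mul_prod_erase _ f (Finset.mem_univ j)]
  refine Ideal.mul_mem_left _ _ ?_
  have := Ideal.prod_mem_prod (s := Finset.univ.erase j) (I := fun _ => pointIdeal k (Z j))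
    fun i hi => hf i j (Finset.ne_of_mem_erase hi).symm
  rwa [Finset.prod_const, Finset.card_erase_of_mem (Finset.mem_univ j), Finset.card_univ,
    Fintype.card_fin] at this

namespace Mult1Generic

section

variable {s : ℕ} {Z : Fin s → (k × k) × (k × k)}

lemma exists_mem_ne_zero (hZ : Mult1Generic k Z) (S : Finset (Fin s)) {i j : ℕ}
    (h : S.card < (i + 1) * (j + 1)) :
    ∃ F ∈ ⨅ a ∈ S, pointIdeal k (Z a), F ≠ 0 ∧ F.IsWeightedHomogeneous w4 (i, j) :=
  exists_mem_ne_zero_of_finrank_bipiece_pos (by rw [hZ.2.2]; omega)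

lemma bipiece_idealOfPoints_eq_bot (hZ : Mult1Generic k Z) {i j : ℕ} (h : (i + 1) * (j + 1) ≤ s) :
    bipiece k (idealOfPoints k Z) (i, j) = ⊥ := by
  have hrank := hZ.2.2 Finset.univ i j
  rw [Finset.card_univ, Fintype.card_fin, Nat.sub_eq_zero_of_le h] at hrank
  simpa [idealOfPoints] using Submodule.finrank_eq_zero.1 hrank

end

variable {Z : Fin 4 → (k × k) × (k × k)}

lemma idealOfPoints_le_pow_idealOfVars (hZ : Mult1Generic k Z) :
    idealOfPoints k Z ≤ idealOfVars (Fin 4) k ^ 3 := by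
  refine le_pow_idealOfVars_of_bipiece_eq_bot
    (Ideal.IsHomogeneous.iInf fun a => isHomogeneous_pointIdeal (Z a)) fun ⟨i, j⟩ hij => ?_
  refine hZ.bipiece_idealOfPoints_eq_bot ?_
  obtain ⟨hi, hj⟩ : i ≤ 2 ∧ j ≤ 2 := by dsimp at hij; omega
  interval_cases i <;> interval_cases j <;> simp_all

lemma exists_mem_symbolicPower_three (hZ : Mult1Generic k Z) :
    ∃ F ∈ symbolicPower k Z 3, F ≠ 0 ∧ F.IsWeightedHomogeneous w4 (4, 4) := by
  have hC (i : Fin 4) : ∃ C : MvPolynomial (Fin 4) k, (∀ j, j ≠ i → C ∈ pointIdeal k (Z j)) ∧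
      C ≠ 0 ∧ C.IsWeightedHomogeneous w4 (1, 1) := by
    obtain ⟨C, hCS, hC0, hC⟩ := hZ.exists_mem_ne_zero (Finset.univ.erase i) (i := 1) (j := 1)
      (by simp)
    refine ⟨C, fun j hj => ?_, hC0, hC⟩
    exact Ideal.mem_iInf.1 (Ideal.mem_iInf.1 hCS j) (Finset.mem_erase.2 ⟨hj, Finset.mem_univ j⟩)
  choose C hCZ hC0 hC using hC
  refine ⟨∏ i, C i, prod_mem_symbolicPower Z C hCZ, Finset.prod_ne_zero_iff.2 fun i _ => hC0 i, ?_⟩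
  exact IsWeightedHomogeneous.prod _ C _ fun i _ => hC i

end Mult1Generic

theorem four_points_third_symbolic_ne_third_power_general {k : Type*} [Field k]
    (Z : Fin 4 → (k × k) × (k × k)) (hZ : Mult1Generic k Z) :
    alpha k (symbolicPower k Z 3) ≤ 8 ∧
    alpha k (idealOfPoints k Z ^ 3) = 9 ∧
    ¬ symbolicPower k Z 3 ≤ idealOfPoints k Z ^ 3 ∧
    symbolicPower k Z 3 ≠ idealOfPoints k Z ^ 3 := by
  obtain ⟨F, hFZ, hF0, hF⟩ := hZ.exists_mem_symbolicPower_three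
  obtain ⟨f, hfZ, hf0, hf⟩ := hZ.exists_mem_ne_zero Finset.univ (i := 2) (j := 1) (by simp)
  replace hfZ : f ∈ idealOfPoints k Z := by simpa [idealOfPoints] using hfZ
  have hpow : idealOfPoints k Z ^ 3 ≤ idealOfVars (Fin 4) k ^ 9 := by
    simpa [← pow_mul] using Ideal.pow_right_mono hZ.idealOfPoints_le_pow_idealOfVars 3
  have hnot : ¬ symbolicPower k Z 3 ≤ idealOfPoints k Z ^ 3 := fun hle =>
    hF0 (hF.eq_zero_of_mem_pow_idealOfVars (hpow (hle hFZ)) (by norm_num))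
  refine ⟨alpha_le_of_mem hFZ hF0 hF, ?_, hnot, fun h => hnot h.le⟩
  exact alpha_eq_of_le_pow_idealOfVars hpow (Ideal.pow_mem_pow hfZ 3) (pow_ne_zero 3 hf0)
    (hf.pow 3) rfl

/-- For four points of `P^1 × P^1` in multiplicity 1 generic position,
`α(I^(3)) ≤ 8` while `α(I^3) = 9`; in particular `I^(3) ⊄ I^3`, so `I^(3) ≠ I^3`. -/
theorem four_points_third_symbolic_ne_third_power {k : Type*} [Field k] [IsAlgClosed k]
    (Z : Fin 4 → (k × k) × (k × k)) (hZ : Mult1Generic k Z) :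
    alpha k (symbolicPower k Z 3) ≤ 8 ∧
    alpha k (idealOfPoints k Z ^ 3) = 9 ∧
    ¬ symbolicPower k Z 3 ≤ idealOfPoints k Z ^ 3 ∧
    symbolicPower k Z 3 ≠ idealOfPoints k Z ^ 3 :=
  four_points_third_symbolic_ne_third_power_general Z hZ
end
end
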